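/- arXiv:math/0404350 — 5 statements merged into one kernel-verified Lean document; each statement's English description precedes it below -/
import Mathlib

section
/- For all real p ≥ 2, q ≥ 2 and every integer k ≥ 2, one has p^{k-1} · q^{p - p^k} ≤ 2^{-k+2}. -/
/-!
Since `p - p^k ≤ 0`, the factor `q^(p - p^k)` is at most `2^(p - p^k)`, and Bernoulli's
inequality gives `p ≤ 2^(p-1)`. The left side is thus at most `2^(pk - p^k + 1 - k)`, and
`pk ≤ p^k` (Bernoulli again) brings the exponent down to `1 - k ≤ 2 - k`.
-/

open Real

theorem le_two_rpow_sub_one {p : ℝ} (hp : 2 ≤ p) : p ≤ (2 : ℝ) ^ (p - 1) := by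
  have bernoulli := one_add_mul_self_le_rpow_one_add (s := 1) (by norm_num)
    (by linarith : 1 ≤ p - 1)
  norm_num at bernoulli
  linarith

theorem mul_le_pow_of_two_le {p : ℝ} (hp : 2 ≤ p) (k : ℕ) : p * k ≤ p ^ k := by
  cases k with
  | zero => simp
  | succ k =>
    have bernoulli := one_add_mul_le_pow (by linarith : (-2 : ℝ) ≤ p - 1) k
    rw [add_sub_cancel] at bernoulli
    rw [pow_succ']
    push_cast
    gcongr
    nlinarith

/-- For all real `p ≥ 2`, `q ≥ 2` and every integer `k ≥ 2`,
`p^{k-1} · q^{p - p^k} ≤ 2^{-k+2}`. -/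
theorem term_bound (p q : ℝ) (hp : 2 ≤ p) (hq : 2 ≤ q) (k : ℕ) (hk : 2 ≤ k) :
    p ^ ((k : ℝ) - 1) * q ^ (p - p ^ (k : ℝ)) ≤ (2 : ℝ) ^ (-(k : ℝ) + 2) := by
  have hk_one : (1 : ℝ) ≤ k := by exact_mod_cast one_le_two.trans hk
  have hpk : p * k ≤ p ^ (k : ℝ) := by
    rw [rpow_natCast]
    exact mul_le_pow_of_two_le hp k
  calc p ^ ((k : ℝ) - 1) * q ^ (p - p ^ (k : ℝ))
      ≤ ((2 : ℝ) ^ (p - 1)) ^ ((k : ℝ) - 1) * (2 : ℝ) ^ (p - p ^ (k : ℝ)) := by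
        gcongr ?_ * ?_
        · exact rpow_le_rpow (by linarith) (le_two_rpow_sub_one hp) (by linarith)
        · exact rpow_le_rpow_of_nonpos two_pos hq (by nlinarith)
    _ = (2 : ℝ) ^ ((p - 1) * ((k : ℝ) - 1) + (p - p ^ (k : ℝ))) := by
        rw [← rpow_mul zero_le_two, ← rpow_add two_pos]
    _ ≤ (2 : ℝ) ^ (-(k : ℝ) + 2) :=
        rpow_le_rpow_of_exponent_le one_le_two (by nlinarith)
end

section
/- For all real x ≥ 2 and y ≥ 2, the tail sum satisfies ∑_{k=2}^∞ x^{k-1} · y^{x - x^k} ≤ 2. -/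
/-!
Write `a = x^(k+1)`, so that the `k`-th term is `a * y^(-(a-1)x)`. Bernoulli's inequality gives
both `a ≤ 2^(a-1)` and `a ≥ k + 2`, hence the term is at most `2^((a-1)(1-x)) ≤ 2^(-(a-1)) ≤ 2^(-k)`,
and the geometric series sums to `2`.
-/

open Real

lemma le_two_rpow_sub_one_s4 {a : ℝ} (ha : 2 ≤ a) : a ≤ 2 ^ (a - 1) := by
  have := one_add_mul_self_le_rpow_one_add (s := 1) (by norm_num) (p := a - 1) (by linarith)
  norm_num at this
  linarith

lemma mul_rpow_sub_mul_le_two_rpow {a x y : ℝ} (ha : 2 ≤ a) (hx : 2 ≤ x) (hy : 2 ≤ y) :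
    a * y ^ (x - a * x) ≤ 2 ^ (1 - a) := by
  have hexp : x - a * x ≤ 0 := by nlinarith
  calc a * y ^ (x - a * x) ≤ 2 ^ (a - 1) * 2 ^ (x - a * x) :=
        mul_le_mul (le_two_rpow_sub_one_s4 ha) (rpow_le_rpow_of_nonpos two_pos hy hexp)
          (rpow_nonneg (by linarith) _) (rpow_nonneg zero_le_two _)
    _ = 2 ^ ((a - 1) + (x - a * x)) := (rpow_add two_pos _ _).symm
    _ ≤ 2 ^ (1 - a) := rpow_le_rpow_of_exponent_le one_le_two (by nlinarith)

lemma tail_term_le {x y : ℝ} (hx : 2 ≤ x) (hy : 2 ≤ y) (k : ℕ) :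
    x ^ ((k : ℝ) + 1) * y ^ (x - x ^ ((k : ℝ) + 2)) ≤ (1 / 2) ^ k := by
  have hx0 : 0 < x := by linarith
  have hsucc : x ^ ((k : ℝ) + 2) = x ^ ((k : ℝ) + 1) * x := by
    rw [← rpow_add_one hx0.ne']; ring_nf
  have hnat : x ^ ((k : ℝ) + 1) = x ^ (k + 1) := by exact_mod_cast rpow_natCast x (k + 1)
  have hbernoulli : 1 + ((k + 1 : ℕ) : ℝ) * (x - 1) ≤ x ^ (k + 1) := by
    simpa using one_add_mul_le_pow (a := x - 1) (by linarith) (k + 1)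
  have hlarge : (k : ℝ) + 2 ≤ x ^ ((k : ℝ) + 1) := by
    rw [hnat]; push_cast at hbernoulli; nlinarith
  calc x ^ ((k : ℝ) + 1) * y ^ (x - x ^ ((k : ℝ) + 2))
      ≤ 2 ^ (1 - x ^ ((k : ℝ) + 1)) := by
        rw [hsucc]; exact mul_rpow_sub_mul_le_two_rpow (by linarith) hx hy
    _ ≤ 2 ^ (-(k : ℝ)) := rpow_le_rpow_of_exponent_le one_le_two (by linarith)
    _ = (1 / 2) ^ k := by rw [rpow_neg zero_le_two, rpow_natCast, one_div, inv_pow]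

/-- For all real `x ≥ 2` and `y ≥ 2`, the tail sum satisfies
`∑_{k=2}^∞ x^{k-1} · y^{x - x^k} ≤ 2` (here the index `k ≥ 2` is represented as
`k + 2` for `k : ℕ`). -/
theorem tail_sum_le_two (x y : ℝ) (hx : 2 ≤ x) (hy : 2 ≤ y) :
    ∑' k : ℕ, x ^ ((k : ℝ) + 1) * y ^ (x - x ^ ((k : ℝ) + 2)) ≤ 2 := by
  have hnonneg : ∀ k : ℕ, 0 ≤ x ^ ((k : ℝ) + 1) * y ^ (x - x ^ ((k : ℝ) + 2)) := fun k =>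
    mul_nonneg (rpow_nonneg (by linarith) _) (rpow_nonneg (by linarith) _)
  have hgeom : Summable fun k : ℕ => ((1 : ℝ) / 2) ^ k :=
    summable_geometric_of_lt_one (by norm_num) (by norm_num)
  calc ∑' k : ℕ, x ^ ((k : ℝ) + 1) * y ^ (x - x ^ ((k : ℝ) + 2))
      ≤ ∑' k : ℕ, ((1 : ℝ) / 2) ^ k :=
        (hgeom.of_nonneg_of_le hnonneg (tail_term_le hx hy)).tsum_le_tsum (tail_term_le hx hy) hgeom
    _ = 2 := tsum_geometric_two
end

section
/- For all real x ≥ 2 and y ≥ 2, F(x, y) ≤ 6 · y^{-x}. -/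
open Real

/-- `F(x,y) = ∑_{k=1}^∞ x^{k-1} · y^{-x^k} / (1 - y^{-x^k})²`. -/
noncomputable def F (x y : ℝ) : ℝ :=
  ∑' k : ℕ, x ^ (k : ℝ) * y ^ (-(x ^ ((k : ℝ) + 1))) / (1 - y ^ (-(x ^ ((k : ℝ) + 1)))) ^ 2

lemma le_two_rpow (a : ℝ) (ha : 2 ≤ a) : a ≤ (2:ℝ) ^ (a - 1) := by
  have hlog := Real.log_two_gt_d9
  have h2 : (2:ℝ) ^ (a - 1) = 2 * Real.exp (Real.log 2 * (a - 2)) := by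
    rw [Real.rpow_def_of_pos (by norm_num)]
    rw [show Real.log 2 * (a-1) = Real.log 2 + Real.log 2 * (a-2) by ring]
    rw [Real.exp_add, Real.exp_log (by norm_num)]
  have h3 := Real.add_one_le_exp (Real.log 2 * (a - 2))
  nlinarith [h3]

/-- For all real `x ≥ 2` and `y ≥ 2`, `F(x,y) ≤ 6 · y^{-x}`. -/
theorem F_le (x y : ℝ) (hx : 2 ≤ x) (hy : 2 ≤ y) : F x y ≤ 6 * y ^ (-x) := by
  have hx0 : (0:ℝ) < x := by linarith
  have hy0 : (0:ℝ) < y := by linarith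
  have hx1 : (1:ℝ) ≤ x := by linarith
  -- the exponent e k = x ^ ((k:ℝ)+1) is at least 2
  have he2 : ∀ k : ℕ, (2:ℝ) ≤ x ^ ((k : ℝ) + 1) := by
    intro k
    calc (2:ℝ) ≤ x := hx
    _ = x ^ (1:ℝ) := (Real.rpow_one x).symm
    _ ≤ x ^ ((k : ℝ) + 1) := by
        apply Real.rpow_le_rpow_of_exponent_le hx1
        have := Nat.cast_nonneg (α := ℝ) k; linarith
  -- t k = y ^ (-(e k)) is in (0, 1/4]
  have ht_pos : ∀ k : ℕ, (0:ℝ) < y ^ (-(x ^ ((k : ℝ) + 1))) :=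
    fun k => Real.rpow_pos_of_pos hy0 _
  have ht_le : ∀ k : ℕ, y ^ (-(x ^ ((k : ℝ) + 1))) ≤ 1/4 := by
    intro k
    have h4 : (4:ℝ) ≤ y ^ (x ^ ((k : ℝ) + 1)) := by
      calc (4:ℝ) = (2:ℝ) ^ (2:ℝ) := by
            rw [show (2:ℝ) = ((2:ℕ):ℝ) by norm_num, Real.rpow_natCast]; norm_num
      _ ≤ (2:ℝ) ^ (x ^ ((k : ℝ) + 1)) :=
            Real.rpow_le_rpow_of_exponent_le (by norm_num) (he2 k)
      _ ≤ y ^ (x ^ ((k : ℝ) + 1)) := by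
            apply Real.rpow_le_rpow (by norm_num) hy
            positivity
    rw [Real.rpow_neg hy0.le]
    rw [inv_le_comm₀ (Real.rpow_pos_of_pos hy0 _) (by norm_num)]
    linarith
  -- u k = x^k * y^(-e k) satisfies u k ≤ y^(-x) * (1/2)^k
  have hu : ∀ k : ℕ, x ^ (k : ℝ) * y ^ (-(x ^ ((k : ℝ) + 1))) ≤ y ^ (-x) * (1/2) ^ k := by
    intro k
    induction k with
    | zero =>
      simp [Real.rpow_zero, Real.rpow_one]
    | succ k ih =>
      have hxk : (0:ℝ) < x ^ (k : ℝ) := Real.rpow_pos_of_pos hx0 _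
      set e := x ^ ((k : ℝ) + 1) with he
      have he2' := he2 k
      -- key: x * y^(-(e*x)) ≤ (1/2) * y^(-e)
      have hkey : x * y ^ (-(e * x)) ≤ (1/2) * y ^ (-e) := by
        have hx2 : x ≤ (1/2) * y ^ (e * (x - 1)) := by
          have c1 : (2:ℝ) ^ (x : ℝ) ≤ y ^ (e * (x - 1)) := by
            calc (2:ℝ) ^ (x:ℝ) ≤ (2:ℝ) ^ (e * (x-1)) := by
                  apply Real.rpow_le_rpow_of_exponent_le (by norm_num)
                  nlinarith
            _ ≤ y ^ (e * (x-1)) := by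
                  apply Real.rpow_le_rpow (by norm_num) hy
                  nlinarith
          have c2 : x ≤ (1/2) * (2:ℝ) ^ (x:ℝ) := by
            have := le_two_rpow x hx
            have : (2:ℝ) ^ (x - 1) = (2:ℝ)^(x:ℝ) * ((2:ℝ)^(1:ℝ))⁻¹ := by
              rw [← Real.rpow_neg (by norm_num), ← Real.rpow_add (by norm_num)]
              ring_nf
            rw [Real.rpow_one] at this
            nlinarith [le_two_rpow x hx, Real.rpow_pos_of_pos (show (0:ℝ)<2 by norm_num) (x:ℝ)]
          calc x ≤ (1/2) * (2:ℝ)^(x:ℝ) := c2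
          _ ≤ (1/2) * y ^ (e * (x-1)) := by linarith
        have hyex : (0:ℝ) < y ^ (-(e * x)) := Real.rpow_pos_of_pos hy0 _
        have hmul : x * y ^ (-(e*x)) ≤ (1/2) * y ^ (e * (x-1)) * y ^ (-(e*x)) := by
          apply mul_le_mul_of_nonneg_right hx2 hyex.le
        calc x * y ^ (-(e*x)) ≤ (1/2) * y ^ (e * (x-1)) * y ^ (-(e*x)) := hmul
        _ = (1/2) * y ^ (-e) := by
            rw [mul_assoc, ← Real.rpow_add hy0]
            ring_nf
      -- rewrite u (k+1)
      have hcast : (((k+1:ℕ)) : ℝ) = (k:ℝ) + 1 := by push_cast; ring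
      have e1 : x ^ (((k+1:ℕ)) : ℝ) = x ^ (k:ℝ) * x := by
        rw [hcast, Real.rpow_add_one hx0.ne']
      have e2 : x ^ ((((k+1:ℕ)) : ℝ) + 1) = e * x := by
        rw [hcast, he, Real.rpow_add_one hx0.ne']
      rw [e1, e2]
      calc x ^ (k:ℝ) * x * y ^ (-(e*x)) = x ^ (k:ℝ) * (x * y ^ (-(e*x))) := by ring
      _ ≤ x ^ (k:ℝ) * ((1/2) * y ^ (-e)) := by
          apply mul_le_mul_of_nonneg_left hkey hxk.le
      _ = (1/2) * (x ^ (k:ℝ) * y ^ (-e)) := by ring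
      _ ≤ (1/2) * (y ^ (-x) * (1/2)^k) := by linarith [ih]
      _ = y ^ (-x) * (1/2) ^ (k+1) := by ring
  -- term bound
  have hterm : ∀ k : ℕ,
      x ^ (k : ℝ) * y ^ (-(x ^ ((k : ℝ) + 1))) / (1 - y ^ (-(x ^ ((k : ℝ) + 1)))) ^ 2
        ≤ (16/9) * y ^ (-x) * (1/2) ^ k := by
    intro k
    have h1 := ht_pos k
    have h2 := ht_le k
    have hden : (9/16 : ℝ) ≤ (1 - y ^ (-(x ^ ((k : ℝ) + 1)))) ^ 2 := by nlinarith
    have hnum : (0:ℝ) ≤ x ^ (k : ℝ) * y ^ (-(x ^ ((k : ℝ) + 1))) := by positivity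
    calc x ^ (k : ℝ) * y ^ (-(x ^ ((k : ℝ) + 1))) / (1 - y ^ (-(x ^ ((k : ℝ) + 1)))) ^ 2
        ≤ x ^ (k : ℝ) * y ^ (-(x ^ ((k : ℝ) + 1))) / (9/16) := by
          apply div_le_div_of_nonneg_left hnum (by norm_num) hden
    _ = (16/9) * (x ^ (k : ℝ) * y ^ (-(x ^ ((k : ℝ) + 1)))) := by ring
    _ ≤ (16/9) * (y ^ (-x) * (1/2)^k) := by
          have := hu k; nlinarith
    _ = (16/9) * y ^ (-x) * (1/2) ^ k := by ring
  have hterm_nonneg : ∀ k : ℕ,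
      (0:ℝ) ≤ x ^ (k : ℝ) * y ^ (-(x ^ ((k : ℝ) + 1))) / (1 - y ^ (-(x ^ ((k : ℝ) + 1)))) ^ 2 := by
    intro k
    have h1 := ht_pos k
    positivity
  -- summability of the majorant
  have hyx : (0:ℝ) < y ^ (-x) := Real.rpow_pos_of_pos hy0 _
  have hg : Summable (fun k : ℕ => (16/9) * y ^ (-x) * (1/2 : ℝ) ^ k) := by
    apply Summable.mul_left
    exact summable_geometric_of_lt_one (by norm_num) (by norm_num)
  have hf : Summable (fun k : ℕ =>
      x ^ (k : ℝ) * y ^ (-(x ^ ((k : ℝ) + 1))) / (1 - y ^ (-(x ^ ((k : ℝ) + 1)))) ^ 2) :=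
    Summable.of_nonneg_of_le hterm_nonneg hterm hg
  have := Summable.tsum_le_tsum hterm hf hg
  rw [F]
  refine le_trans this ?_
  have hgeom : ∑' k : ℕ, ((1:ℝ)/2) ^ k = 2 := by
    rw [tsum_geometric_of_lt_one (by norm_num) (by norm_num)]; norm_num
  rw [tsum_mul_left, hgeom]
  nlinarith
end

section
/- Let T : ℓ²(ℕ, ℝ) → ℓ²(ℕ, ℝ) be a continuous linear map such that the family (j, k) ↦ |⟨T e_k, e_j⟩| of absolute values of matrix entries (with respect to the standard orthonormal basis (e_k)) is summable, with total sum S. Then for every Hilbert basis (φ_n) of ℓ²(ℕ, ℝ), the sum ∑_n |⟨T φ_n, φ_n⟩| converges and is at most S. -/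
/-!
Expanding in the Hilbert basis `b`, `⟪y, T x⟫ = ∑ⱼₖ ⟪y, b j⟫ ⟪b j, T (b k)⟫ ⟪b k, x⟫`, an absolutely
convergent sum. For an orthonormal family `v`, summing the resulting bound on `‖⟪v n, T (v n)⟫‖`
over finitely many `n` and exchanging sums, each matrix entry gets the weight
`∑ₙ ‖⟪v n, b j⟫‖ ‖⟪v n, b k⟫‖`, which is at most `1` by Cauchy–Schwarz and Bessel's inequality.
-/

open scoped InnerProductSpace

variable {𝕜 E ι κ : Type*} [RCLike 𝕜] [NormedAddCommGroup E] [InnerProductSpace 𝕜 E]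

theorem Orthonormal.sum_norm_inner_mul_norm_inner_le {v : κ → E} (hv : Orthonormal 𝕜 v)
    (s : Finset κ) (x y : E) :
    ∑ n ∈ s, ‖⟪v n, x⟫_𝕜‖ * ‖⟪v n, y⟫_𝕜‖ ≤ ‖x‖ * ‖y‖ := by
  have bessel (z : E) : √(∑ n ∈ s, ‖⟪v n, z⟫_𝕜‖ ^ 2) ≤ ‖z‖ :=
    (Real.sqrt_le_sqrt (hv.sum_inner_products_le z)).trans_eq (Real.sqrt_sq (norm_nonneg z))
  exact (Real.sum_mul_le_sqrt_mul_sqrt s _ _).trans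
    (mul_le_mul (bessel x) (bessel y) (Real.sqrt_nonneg _) (norm_nonneg x))

namespace HilbertBasis

variable (b : HilbertBasis ι 𝕜 E) (T : E →L[𝕜] E)

theorem summable_norm_inner_mul_inner_mul_inner
    (hT : Summable fun jk : ι × ι => ‖⟪b jk.1, T (b jk.2)⟫_𝕜‖) (x y : E) :
    Summable fun jk : ι × ι =>
      ‖⟪y, b jk.1⟫_𝕜‖ * ‖⟪b jk.1, T (b jk.2)⟫_𝕜‖ * ‖⟪b jk.2, x⟫_𝕜‖ := by
  have coeff_le (z : E) (i : ι) : ‖⟪z, b i⟫_𝕜‖ ≤ ‖z‖ := by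
    simpa [b.orthonormal.1 i] using norm_inner_le_norm (𝕜 := 𝕜) z (b i)
  refine Summable.of_nonneg_of_le (fun _ => by positivity) (fun jk => ?_)
    ((hT.mul_left ‖y‖).mul_right ‖x‖)
  gcongr
  · exact coeff_le y jk.1
  · rw [norm_inner_symm]; exact coeff_le x jk.2

theorem hasSum_inner_apply (hT : Summable fun jk : ι × ι => ‖⟪b jk.1, T (b jk.2)⟫_𝕜‖)
    (x y : E) :
    HasSum (fun jk : ι × ι => ⟪y, b jk.1⟫_𝕜 * ⟪b jk.1, T (b jk.2)⟫_𝕜 * ⟪b jk.2, x⟫_𝕜)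
      ⟪y, T x⟫_𝕜 := by
  have hsum :
      Summable fun jk : ι × ι => ⟪y, b jk.1⟫_𝕜 * ⟪b jk.1, T (b jk.2)⟫_𝕜 * ⟪b jk.2, x⟫_𝕜 :=
    .of_norm (by simpa only [norm_mul] using b.summable_norm_inner_mul_inner_mul_inner T hT x y)
  have columns : HasSum (fun k => ⟪y, T (b k)⟫_𝕜 * ⟪b k, x⟫_𝕜) ⟪y, T x⟫_𝕜 := by
    convert (b.hasSum_repr x).mapL (innerSL 𝕜 y ∘L T) using 1
    · ext k
      simp [b.repr_apply_apply, mul_comm]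
    · simp
  have rows (k : ι) : HasSum (fun j => ⟪y, b j⟫_𝕜 * ⟪b j, T (b k)⟫_𝕜 * ⟪b k, x⟫_𝕜)
      (⟪y, T (b k)⟫_𝕜 * ⟪b k, x⟫_𝕜) :=
    (b.hasSum_inner_mul_inner y (T (b k))).mul_right _
  have hfibers := ((Equiv.prodComm ι ι).hasSum_iff.mpr hsum.hasSum).prod_fiberwise rows
  exact columns.unique hfibers ▸ hsum.hasSum

theorem norm_inner_apply_le (hT : Summable fun jk : ι × ι => ‖⟪b jk.1, T (b jk.2)⟫_𝕜‖)
    (x y : E) :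
    ‖⟪y, T x⟫_𝕜‖ ≤
      ∑' jk : ι × ι, ‖⟪y, b jk.1⟫_𝕜‖ * ‖⟪b jk.1, T (b jk.2)⟫_𝕜‖ * ‖⟪b jk.2, x⟫_𝕜‖ :=
  (b.hasSum_inner_apply T hT x y).norm_le_of_bounded
    (b.summable_norm_inner_mul_inner_mul_inner T hT x y).hasSum (fun _ => by simp [norm_mul])

theorem sum_norm_inner_apply_self_le {S : ℝ}
    (hT : HasSum (fun jk : ι × ι => ‖⟪b jk.1, T (b jk.2)⟫_𝕜‖) S)
    {v : κ → E} (hv : Orthonormal 𝕜 v) (s : Finset κ) :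
    ∑ n ∈ s, ‖⟪v n, T (v n)⟫_𝕜‖ ≤ S := by
  let t : κ → ι × ι → ℝ := fun n jk =>
    ‖⟪v n, b jk.1⟫_𝕜‖ * ‖⟪b jk.1, T (b jk.2)⟫_𝕜‖ * ‖⟪b jk.2, v n⟫_𝕜‖
  have ht (n : κ) : Summable (t n) :=
    b.summable_norm_inner_mul_inner_mul_inner T hT.summable (v n) (v n)
  have weight_le (jk : ι × ι) : ∑ n ∈ s, t n jk ≤ ‖⟪b jk.1, T (b jk.2)⟫_𝕜‖ := by
    calc ∑ n ∈ s, t n jk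
        = ‖⟪b jk.1, T (b jk.2)⟫_𝕜‖ * ∑ n ∈ s, ‖⟪v n, b jk.1⟫_𝕜‖ * ‖⟪v n, b jk.2⟫_𝕜‖ := by
          rw [Finset.mul_sum]
          refine Finset.sum_congr rfl fun n _ => ?_
          simp only [t, norm_inner_symm (b jk.2)]
          ring
      _ ≤ ‖⟪b jk.1, T (b jk.2)⟫_𝕜‖ * (‖b jk.1‖ * ‖b jk.2‖) := by
          gcongr; exact hv.sum_norm_inner_mul_norm_inner_le s _ _
      _ = ‖⟪b jk.1, T (b jk.2)⟫_𝕜‖ := by simp [b.orthonormal.1]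
  calc ∑ n ∈ s, ‖⟪v n, T (v n)⟫_𝕜‖
      ≤ ∑ n ∈ s, ∑' jk, t n jk := Finset.sum_le_sum fun n _ =>
        b.norm_inner_apply_le T hT.summable (v n) (v n)
    _ = ∑' jk, ∑ n ∈ s, t n jk := (Summable.tsum_finsetSum fun n _ => ht n).symm
    _ ≤ ∑' jk : ι × ι, ‖⟪b jk.1, T (b jk.2)⟫_𝕜‖ :=
        Summable.tsum_le_tsum weight_le (summable_sum fun n _ => ht n) hT.summable
    _ = S := hT.tsum_eq

theorem summable_norm_inner_apply_self_and_tsum_le {S : ℝ}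
    (hT : HasSum (fun jk : ι × ι => ‖⟪b jk.1, T (b jk.2)⟫_𝕜‖) S)
    {v : κ → E} (hv : Orthonormal 𝕜 v) :
    Summable (fun n => ‖⟪v n, T (v n)⟫_𝕜‖) ∧ ∑' n, ‖⟪v n, T (v n)⟫_𝕜‖ ≤ S := by
  have hfin := b.sum_norm_inner_apply_self_le T hT hv
  have hsum := summable_of_sum_le (fun _ => norm_nonneg _) hfin
  exact ⟨hsum, hsum.tsum_le_of_sum_le hfin⟩

end HilbertBasis

/-- If `T : ℓ²(ℕ,ℝ) → ℓ²(ℕ,ℝ)` is a continuous linear map whose family of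
absolute values of matrix entries `(j,k) ↦ |⟨T e_k, e_j⟩|` (in the standard orthonormal
basis) is summable with total sum `S`, then for every Hilbert basis `(φ_n)` of `ℓ²(ℕ,ℝ)`
the sum `∑_n |⟨T φ_n, φ_n⟩|` converges and is at most `S`. -/
theorem diag_abs_summable_of_entries_summable
    (T : lp (fun _ : ℕ => ℝ) 2 →L[ℝ] lp (fun _ : ℕ => ℝ) 2) (S : ℝ)
    (hS : HasSum (fun jk : ℕ × ℕ =>
      |⟪T (lp.single 2 jk.2 (1 : ℝ)), lp.single 2 jk.1 (1 : ℝ)⟫_ℝ|) S)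
    (φ : HilbertBasis ℕ ℝ (lp (fun _ : ℕ => ℝ) 2)) :
    Summable (fun n : ℕ => |⟪T (φ n), φ n⟫_ℝ|) ∧
      ∑' n : ℕ, |⟪T (φ n), φ n⟫_ℝ| ≤ S := by
  let e : HilbertBasis ℕ ℝ (lp (fun _ : ℕ => ℝ) 2) := .ofRepr (.refl ℝ _)
  have he (k : ℕ) : e k = lp.single 2 k 1 := (e.repr_symm_single k).symm
  have hT : HasSum (fun jk : ℕ × ℕ => ‖⟪e jk.1, T (e jk.2)⟫_ℝ‖) S := by
    simpa only [he, Real.norm_eq_abs, real_inner_comm] using hS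
  simpa only [Real.norm_eq_abs, real_inner_comm] using
    e.summable_norm_inner_apply_self_and_tsum_le T hT φ.orthonormal
end

section
/- Define the modified function Q̃(x, y) = QNC(x, y) + (1/(12xy)) · ( 1/(y-1) - 1/(x-1) ) for real x, y > 1, corresponding to adding the k = 0 term to the series defining F. Then the family (i, j) ↦ |Q̃(p_i, p_j)|, indexed by pairs of positive integers, is NOT summable: ∑_{i,j} |Q̃(p_i, p_j)| = +∞. -/
open Real

/-- `QNC(x,y) = (1/(12xy)) · ( x(y-1)F(x,y) - y(x-1)F(y,x) )`. -/
noncomputable def QNC (x y : ℝ) : ℝ :=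
  1 / (12 * x * y) * (x * (y - 1) * F x y - y * (x - 1) * F y x)

/-- The modified function `Q̃(x,y) = QNC(x,y) + (1/(12xy))·(1/(y-1) - 1/(x-1))`,
corresponding to adding the `k = 0` term to the series defining `F`. -/
noncomputable def QNCtilde (x y : ℝ) : ℝ :=
  QNC x y + 1 / (12 * x * y) * (1 / (y - 1) - 1 / (x - 1))

/-- `nthPrime i` is the `(i+1)`-st prime, so `nthPrime 0 = 2`, `nthPrime 1 = 3`, ... -/
noncomputable def nthPrime (i : ℕ) : ℕ := Nat.nth Nat.Prime i

/-! On the column `y = 2` everything is explicit: `F(x, 2) ≥ 0`, while the terms of `F(2, x)` are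
dominated by a geometric series of ratio `2 / x²`, so `F(2, x) ≤ 2 / (x² - 2)`. Hence
`Q̃(x, 2) ≥ 1 / (48 x)` for `x ≥ 13`, and the column `j = 0` alone dominates `(1/48) ∑ 1/p`,
which diverges. -/

open Filter

noncomputable def Fterm (x y : ℝ) (k : ℕ) : ℝ :=
  x ^ (k : ℝ) * y ^ (-(x ^ ((k : ℝ) + 1))) / (1 - y ^ (-(x ^ ((k : ℝ) + 1)))) ^ 2

lemma F_eq_tsum_Fterm (x y : ℝ) : F x y = ∑' k, Fterm x y k := rfl

lemma Fterm_nonneg {x y : ℝ} (hx : 0 ≤ x) (hy : 0 ≤ y) (k : ℕ) : 0 ≤ Fterm x y k := by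
  have := rpow_nonneg hy (-(x ^ ((k : ℝ) + 1)))
  unfold Fterm
  positivity

lemma F_nonneg {x y : ℝ} (hx : 0 ≤ x) (hy : 0 ≤ y) : 0 ≤ F x y := by
  rw [F_eq_tsum_Fterm]
  exact tsum_nonneg (Fterm_nonneg hx hy)

lemma Fterm_le_geometric {a y : ℝ} (ha : 2 ≤ a) (hy : 2 ≤ y) (k : ℕ) :
    Fterm a y k ≤ 2 / y ^ 2 * (a / y ^ 2) ^ k := by
  set t := y ^ (-(a ^ ((k : ℝ) + 1)))
  set s := (y ^ 2) ^ (k + 1)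
  have hexp : ((2 * (k + 1) : ℕ) : ℝ) ≤ a ^ ((k : ℝ) + 1) := by
    have hk : 2 * (k + 1) ≤ 2 ^ (k + 1) := by
      have := Nat.lt_two_pow_self (n := k); rw [pow_succ]; omega
    rw [show (k : ℝ) + 1 = ((k + 1 : ℕ) : ℝ) by push_cast; ring, rpow_natCast]
    calc ((2 * (k + 1) : ℕ) : ℝ) ≤ ((2 ^ (k + 1) : ℕ) : ℝ) := by exact_mod_cast hk
      _ ≤ a ^ (k + 1) := by push_cast; gcongr
  have ht0 : 0 ≤ t := rpow_nonneg (by linarith) _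
  have hts : t ≤ s⁻¹ := by
    simp only [t, s]
    rw [rpow_neg (by linarith), ← pow_mul, ← rpow_natCast]
    gcongr
    linarith
  have hs : 4 ≤ s := by
    calc (4 : ℝ) ≤ y ^ 2 := by nlinarith
      _ ≤ s := le_self_pow₀ (by nlinarith) (by omega)
  have hden : 1 / 2 ≤ (1 - t) ^ 2 := by
    have : s⁻¹ ≤ 1 / 4 := by rw [inv_le_comm₀] <;> linarith
    nlinarith
  calc Fterm a y k = a ^ k * t / (1 - t) ^ 2 := by rw [Fterm, rpow_natCast]
    _ ≤ a ^ k * s⁻¹ / (1 / 2) := by gcongr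
    _ = 2 / y ^ 2 * (a / y ^ 2) ^ k := by
        simp only [s]; rw [pow_succ', div_pow]; field_simp

lemma F_le_s14 {a y : ℝ} (ha : 2 ≤ a) (hy : 2 ≤ y) (hay : a < y ^ 2) : F a y ≤ 2 / (y ^ 2 - a) := by
  have hr0 : 0 ≤ a / y ^ 2 := by positivity
  have hr1 : a / y ^ 2 < 1 := (div_lt_one (by positivity)).2 hay
  have hgeom := (summable_geometric_of_lt_one hr0 hr1).mul_left (2 / y ^ 2)
  have hF := hgeom.of_nonneg_of_le (Fterm_nonneg (by linarith) (by linarith))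
    (Fterm_le_geometric ha hy)
  calc F a y = ∑' k, Fterm a y k := F_eq_tsum_Fterm a y
    _ ≤ ∑' k : ℕ, 2 / y ^ 2 * (a / y ^ 2) ^ k :=
        hF.tsum_le_tsum (Fterm_le_geometric ha hy) hgeom
    _ = 2 / (y ^ 2 - a) := by
        have : y ^ 2 - a ≠ 0 := by linarith
        rw [tsum_mul_left, tsum_geometric_of_lt_one hr0 hr1]
        field_simp

lemma QNCtilde_two_eq {x : ℝ} (hx0 : x ≠ 0) (hx1 : x - 1 ≠ 0) :
    QNCtilde x 2 = (x * F x 2 - 2 * (x - 1) * F 2 x + 1 - 1 / (x - 1)) / (24 * x) := by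
  unfold QNCtilde QNC
  field_simp
  ring

lemma one_div_le_QNCtilde_two {x : ℝ} (hx : 13 ≤ x) : 1 / (48 * x) ≤ QNCtilde x 2 := by
  have hF2 : F 2 x ≤ 2 / (x ^ 2 - 2) := F_le_s14 le_rfl (by linarith) (by nlinarith)
  have hFx : 0 ≤ x * F x 2 := mul_nonneg (by linarith) (F_nonneg (by linarith) zero_le_two)
  have hsmall : 2 * (x - 1) * F 2 x ≤ 5 / 12 :=
    calc 2 * (x - 1) * F 2 x ≤ 2 * (x - 1) * (2 / (x ^ 2 - 2)) := by gcongr; linarith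
      _ ≤ 5 / 12 := by
        rw [mul_div_assoc', div_le_div_iff₀ (by nlinarith) (by norm_num)]
        nlinarith
  have hinv : 1 / (x - 1) ≤ 1 / 12 := by gcongr; linarith
  rw [QNCtilde_two_eq (by linarith) (by linarith), show 48 * x = 2 * (24 * x) by ring,
    ← div_div]
  gcongr
  linarith

lemma not_summable_one_div_nthPrime : ¬ Summable fun i => (1 / nthPrime i : ℝ) := by
  have hinj := Nat.nth_injective Nat.infinite_setOfPred_prime
  have hcomp : (fun i => (1 / nthPrime i : ℝ)) =
      {p | p.Prime}.indicator (fun n : ℕ => (1 : ℝ) / n) ∘ Nat.nth Nat.Prime := by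
    ext i
    simp [nthPrime]
  rw [hcomp, hinj.summable_iff fun n hn => Set.indicator_of_notMem ?_ _]
  · exact not_summable_one_div_on_primes
  · rwa [Nat.range_nth_of_infinite Nat.infinite_setOfPred_prime] at hn

/-- The family `(i, j) ↦ |Q̃(p_i, p_j)|` over pairs of positive integers
(reindexed from `0`) is NOT summable: `∑_{i,j} |Q̃(p_i, p_j)| = +∞`. -/
theorem not_summable_abs_Rtilde :
    ¬ Summable (fun ij : ℕ × ℕ =>
      |QNCtilde (nthPrime ij.1 : ℝ) (nthPrime ij.2 : ℝ)|) := by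
  intro hs
  have hcol : Summable fun i => |QNCtilde (nthPrime i) 2| := by
    simpa [Function.comp_def, nthPrime, Nat.nth_prime_zero_eq_two] using
      hs.comp_injective (Prod.mk_left_injective 0)
  have hlarge : ∀ᶠ i in atTop, (13 : ℝ) ≤ nthPrime i := by
    have := (Nat.nth_strictMono Nat.infinite_setOfPred_prime).tendsto_atTop.eventually_ge_atTop 13
    exact this.mono fun i hi => by exact_mod_cast hi
  refine not_summable_one_div_nthPrime (.of_norm_bounded_eventually_nat (hcol.mul_left 48) ?_)
  filter_upwards [hlarge] with i hi
  rw [norm_of_nonneg (by positivity)]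
  calc 1 / (nthPrime i : ℝ) = 48 * (1 / (48 * nthPrime i)) := by field_simp
    _ ≤ 48 * |QNCtilde (nthPrime i) 2| := by
        gcongr
        exact (one_div_le_QNCtilde_two hi).trans (le_abs_self _)
end
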